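/- arXiv:1908.05531 — 2 statements merged into one kernel-verified Lean document; each statement's English description precedes it below -/
import Mathlib

section
/- (Local central limit theorem with drifting parameter, the paper's approximation of f(X_ℓ,n_ℓ|m_ℓ).) Fix m > 0, t > 0, v ∈ ℝ and x ∈ ℝ. For each positive integer N set n_N = ⌈tN⌉, m_N = m(1 + v N^{-1/2}) and X_N = n_N m + x m √N. Then lim_{N→∞} m√N · f(X_N, n_N | m_N) = (2πt)^{-1/2} exp( - (x - v t)² / (2t) ). -/
/-! With `n = ⌈tN⌉`, `u = x√N/n` and `w = v/√N` one has `X_N = n m (1 + u)` and `m_N = m (1 + w)`,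
and Stirling's formula rewrites `m√N f(X_N, n | m_N)` exactly as `√(N/2n) / S_n · exp E`, where
`S_n → √π` is Stirling's sequence and `E = (n - 1) log(1 + u) - n log(1 + w) + n(w - u)/(1 + w)`.
Expanding the logarithms to second order, `E → xv - (x²/t + tv²)/2 = -(x - vt)²/(2t)`, because
`n u² → x²/t`, `n w² → t v²` and `n u w = x v`. -/

open Real Filter

/-- The gamma density `f(X,n|m) = X^(n-1) exp(-X/m) / (m^n (n-1)!)` for `X ≥ 0`, `0` otherwise. -/
noncomputable def gammaDensity (m : ℝ) (n : ℕ) (X : ℝ) : ℝ :=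
  if 0 ≤ X then X ^ (n - 1) * Real.exp (-X / m) / (m ^ n * (Nat.factorial (n - 1))) else 0

open Topology Asymptotics

lemma abs_log_one_add_sub_sub_sq_le {y : ℝ} (hy : |y| ≤ 1 / 2) :
    |log (1 + y) - (y - y ^ 2 / 2)| ≤ 2 * |y| ^ 3 := by
  have hy1 : |-y| < 1 := by rw [abs_neg]; linarith
  have h := abs_log_sub_add_sum_range_le hy1 2
  rw [abs_neg, show (2 : ℕ) + 1 = 3 from rfl, sub_neg_eq_add] at h
  calc |log (1 + y) - (y - y ^ 2 / 2)|
      = |∑ i ∈ Finset.range 2, (-y) ^ (i + 1) / (i + 1) + log (1 + y)| := by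
        congr 1; simp only [Finset.sum_range_succ, Finset.sum_range_zero]; push_cast; ring
    _ ≤ |y| ^ 3 / (1 - |y|) := h
    _ ≤ 2 * |y| ^ 3 := by
        rw [div_le_iff₀ (by linarith)]
        nlinarith [pow_nonneg (abs_nonneg y) 3]

lemma log_one_add_sub_sub_sq_isBigO :
    (fun y : ℝ => log (1 + y) - (y - y ^ 2 / 2)) =O[𝓝 0] fun y => y ^ 3 := by
  refine IsBigO.of_bound 2 ?_
  filter_upwards [Metric.closedBall_mem_nhds (0 : ℝ) (by norm_num : (0 : ℝ) < 1 / 2)] with y hy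
  rw [Metric.mem_closedBall, dist_zero_right] at hy
  simpa [norm_pow] using abs_log_one_add_sub_sub_sq_le hy

lemma tendsto_mul_log_one_add_sub {α : Type*} {l : Filter α} {ν a : α → ℝ} {c : ℝ}
    (ha : Tendsto a l (𝓝 0)) (hc : Tendsto (fun i => ν i * a i ^ 2) l (𝓝 c)) :
    Tendsto (fun i => ν i * (log (1 + a i) - a i)) l (𝓝 (-c / 2)) := by
  have hR : Tendsto (fun i => ν i * (log (1 + a i) - (a i - a i ^ 2 / 2))) l (𝓝 0) := by
    refine ((isBigO_refl ν l).mul (log_one_add_sub_sub_sq_isBigO.comp_tendsto ha)).trans_tendsto ?_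
    simpa [Function.comp_def, pow_succ, mul_assoc] using hc.mul ha
  have h := hR.sub (hc.div_const 2)
  rw [zero_sub, ← neg_div] at h
  exact h.congr fun i => by ring

noncomputable def gammaExponent (ν u w : ℝ) : ℝ :=
  (ν - 1) * log (1 + u) - ν * log (1 + w) + ν * (w - u) / (1 + w)

lemma tendsto_gammaExponent {α : Type*} {l : Filter α} {ν u w : α → ℝ} {a b c : ℝ}
    (hu : Tendsto u l (𝓝 0)) (hw : Tendsto w l (𝓝 0))
    (hu2 : Tendsto (fun i => ν i * u i ^ 2) l (𝓝 a))
    (hw2 : Tendsto (fun i => ν i * w i ^ 2) l (𝓝 b))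
    (huw : Tendsto (fun i => ν i * u i * w i) l (𝓝 c)) :
    Tendsto (fun i => gammaExponent (ν i) (u i) (w i)) l (𝓝 (c - (a + b) / 2)) := by
  have hlog : Tendsto (fun i => log (1 + u i)) l (𝓝 0) := by
    simpa [Function.comp_def] using
      (continuousAt_log (by norm_num : (1 : ℝ) + 0 ≠ 0)).tendsto.comp (hu.const_add 1)
  have hw1 : Tendsto (fun i => 1 + w i) l (𝓝 1) := by simpa using hw.const_add 1
  have h := (((tendsto_mul_log_one_add_sub hu hu2).sub hlog).sub
    (tendsto_mul_log_one_add_sub hw hw2)).add ((huw.sub hw2).div hw1 one_ne_zero)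
  rw [show -a / 2 - 0 - -b / 2 + (c - b) / 1 = c - (a + b) / 2 by ring] at h
  refine h.congr' ?_
  filter_upwards [hw1.eventually_ne one_ne_zero] with i hi
  simp only [gammaExponent, Pi.div_apply]
  field_simp
  ring

lemma mul_gammaDensity_eq {m : ℝ} (hm : 0 < m) {n : ℕ} (hn : n ≠ 0) {u w : ℝ}
    (hu : 0 < 1 + u) (hw : 0 < 1 + w) :
    m * gammaDensity (m * (1 + w)) n (n * m * (1 + u)) =
      (√(2 * n) * Stirling.stirlingSeq n)⁻¹ * exp (gammaExponent n u w) := by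
  obtain ⟨k, rfl⟩ := Nat.exists_eq_add_one_of_ne_zero hn
  have hexp : exp (gammaExponent (k + 1 : ℕ) u w) =
      (1 + u) ^ k / (1 + w) ^ (k + 1) * exp ((k + 1 : ℕ) * (w - u) / (1 + w)) := by
    rw [gammaExponent, exp_add, exp_sub, Nat.cast_add_one, add_sub_cancel_right,
      exp_nat_mul, exp_log hu, ← Nat.cast_add_one, exp_nat_mul, exp_log hw]
  have hX : exp (-((k + 1 : ℕ) * m * (1 + u)) / (m * (1 + w))) =
      exp ((k + 1 : ℕ) * (w - u) / (1 + w)) / exp 1 ^ (k + 1) := by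
    rw [← exp_nat_mul, ← exp_sub, mul_one]
    congr 1
    field_simp
    ring
  rw [gammaDensity, if_pos (by positivity), hexp, hX, Stirling.stirlingSeq,
    Nat.add_sub_cancel, Nat.factorial_succ]
  simp only [mul_pow, div_pow]
  field_simp
  push_cast
  ring

section CeilSequence

variable {t : ℝ}

lemma tendsto_natCeil_mul_div (ht : 0 ≤ t) :
    Tendsto (fun N : ℕ => (⌈t * N⌉₊ : ℝ) / N) atTop (𝓝 t) :=
  (tendsto_nat_ceil_mul_div_atTop ht).comp tendsto_natCast_atTop_atTop

lemma tendsto_div_natCeil_mul (ht : 0 < t) :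
    Tendsto (fun N : ℕ => (N : ℝ) / ⌈t * N⌉₊) atTop (𝓝 t⁻¹) := by
  simpa only [inv_div] using (tendsto_natCeil_mul_div ht.le).inv₀ ht.ne'

lemma tendsto_sqrt_natCast_atTop : Tendsto (fun N : ℕ => √(N : ℝ)) atTop atTop :=
  tendsto_sqrt_atTop.comp tendsto_natCast_atTop_atTop

lemma eventually_natCeil_mul_pos (ht : 0 < t) : ∀ᶠ N : ℕ in atTop, (0 : ℝ) < ⌈t * N⌉₊ := by
  filter_upwards [eventually_gt_atTop 0] with N hN
  exact Nat.cast_pos.mpr (Nat.ceil_pos.mpr (by positivity))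

lemma tendsto_mul_sqrt_div_natCeil_mul (ht : 0 < t) (x : ℝ) :
    Tendsto (fun N : ℕ => x * √N / ⌈t * N⌉₊) atTop (𝓝 0) := by
  have h := ((tendsto_div_natCeil_mul ht).const_mul x).div_atTop tendsto_sqrt_natCast_atTop
  refine h.congr' ?_
  filter_upwards [eventually_gt_atTop 0] with N hN
  have hs : √(N : ℝ) ≠ 0 := by positivity
  field_simp
  rw [sq_sqrt (Nat.cast_nonneg _)]

lemma tendsto_gammaExponent_natCeil (ht : 0 < t) (v x : ℝ) :
    Tendsto (fun N : ℕ => gammaExponent ⌈t * N⌉₊ (x * √N / ⌈t * N⌉₊) (v / √N)) atTop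
      (𝓝 (-(x - v * t) ^ 2 / (2 * t))) := by
  have hw := tendsto_const_nhds (x := v).div_atTop tendsto_sqrt_natCast_atTop
  have hu2 : Tendsto (fun N : ℕ => (⌈t * N⌉₊ : ℝ) * (x * √N / ⌈t * N⌉₊) ^ 2) atTop
      (𝓝 (x ^ 2 * t⁻¹)) := by
    refine ((tendsto_div_natCeil_mul ht).const_mul _).congr' ?_
    filter_upwards [eventually_natCeil_mul_pos ht] with N hn
    rw [div_pow, mul_pow, sq_sqrt (Nat.cast_nonneg _)]
    field_simp
  have hw2 : Tendsto (fun N : ℕ => (⌈t * N⌉₊ : ℝ) * (v / √N) ^ 2) atTop (𝓝 (v ^ 2 * t)) := by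
    refine ((tendsto_natCeil_mul_div ht.le).const_mul _).congr fun N => ?_
    rw [div_pow, sq_sqrt (Nat.cast_nonneg _)]
    ring
  have huw : Tendsto (fun N : ℕ => (⌈t * N⌉₊ : ℝ) * (x * √N / ⌈t * N⌉₊) * (v / √N)) atTop
      (𝓝 (x * v)) := by
    refine tendsto_const_nhds.congr' ?_
    filter_upwards [eventually_natCeil_mul_pos ht, eventually_gt_atTop 0] with N hn hN
    have hs : √(N : ℝ) ≠ 0 := by positivity
    field_simp
  convert tendsto_gammaExponent (tendsto_mul_sqrt_div_natCeil_mul ht x) hw hu2 hw2 huw using 2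
  field_simp
  ring

lemma tendsto_sqrt_mul_inv_sqrt_two_mul_stirlingSeq_natCeil (ht : 0 < t) :
    Tendsto (fun N : ℕ => √N * (√(2 * ⌈t * N⌉₊) * Stirling.stirlingSeq ⌈t * N⌉₊)⁻¹) atTop
      (𝓝 (√(2 * π * t))⁻¹) := by
  have hS : Tendsto (fun N : ℕ => Stirling.stirlingSeq ⌈t * N⌉₊) atTop (𝓝 √π) :=
    Stirling.tendsto_stirlingSeq_sqrt_pi.comp
      (tendsto_nat_ceil_atTop.comp (tendsto_natCast_atTop_atTop.const_mul_atTop ht))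
  have h := ((((tendsto_natCeil_mul_div ht.le).const_mul 2).sqrt).mul hS).inv₀ (by positivity)
  rw [← sqrt_mul (by positivity), mul_right_comm] at h
  refine h.congr' ?_
  filter_upwards [eventually_gt_atTop 0] with N hN
  rw [mul_div_assoc', sqrt_div' _ (Nat.cast_nonneg _)]
  have hs : √(N : ℝ) ≠ 0 := by positivity
  field_simp

end CeilSequence

/-- Local central limit theorem with drifting parameter: with `n_N = ⌈tN⌉`,
`m_N = m(1 + v N^{-1/2})` and `X_N = n_N m + x m √N`, one has
`m√N · f(X_N, n_N | m_N) → (2πt)^{-1/2} exp(-(x - vt)²/(2t))` as `N → ∞`. -/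
theorem gammaDensity_local_clt_drift (m t v x : ℝ) (hm : 0 < m) (ht : 0 < t) :
    Tendsto (fun N : ℕ =>
        m * Real.sqrt N *
          gammaDensity (m * (1 + v / Real.sqrt N)) ⌈t * N⌉₊
            ((⌈t * N⌉₊ : ℝ) * m + x * m * Real.sqrt N))
      atTop
      (nhds ((Real.sqrt (2 * Real.pi * t))⁻¹ * Real.exp (-(x - v * t) ^ 2 / (2 * t)))) := by
  have hu := (tendsto_mul_sqrt_div_natCeil_mul ht x).const_add 1
  have hw := (tendsto_const_nhds (x := v).div_atTop tendsto_sqrt_natCast_atTop).const_add 1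
  rw [add_zero] at hu hw
  refine ((tendsto_sqrt_mul_inv_sqrt_two_mul_stirlingSeq_natCeil ht).mul
    ((continuous_exp.tendsto _).comp (tendsto_gammaExponent_natCeil ht v x))).congr' ?_
  filter_upwards [eventually_natCeil_mul_pos ht, hu.eventually (lt_mem_nhds one_pos),
    hw.eventually (lt_mem_nhds one_pos)] with N hn hu1 hw1
  have hX : (⌈t * N⌉₊ : ℝ) * m + x * m * √N = ⌈t * N⌉₊ * m * (1 + x * √N / ⌈t * N⌉₊) := by
    field_simp
  rw [Function.comp_apply, hX, mul_comm m, mul_assoc (√N) m,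
    mul_gammaDensity_eq hm (Nat.cast_pos.mp hn).ne' hu1 hw1]
  ring
end

section
/- (First moment asymptotics of the centered rescaled kernel, line 2 of (d5).) Fix t > 0 and x̂ ∈ ℝ. For each positive integer N set s_N = t N and b_N = 1 + x̂ N^{-1/2} (assume N large enough that b_N > 0). Then lim_{N→∞} √N · ∫₀^∞ (z − 1) · b_N^{-1} (1 + z/(s_N b_N))^{-s_N} dz = x̂. -/
/-!
Substituting `u = z + s b` turns the kernel into `b⁻¹ (s b)^s u^(-s)`, so for `s > 2` the first
moment `∫₀^∞ (z - 1) b⁻¹ (1 + z/(s b))^(-s) dz` is a combination of the two power integrals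
`∫_{sb}^∞ u^(1-s) du` and `∫_{sb}^∞ u^(-s) du`, and equals `s (s (b - 1) + 2) / ((s - 1) (s - 2))`.
With `s = tN` and `b - 1 = x̂ ε`, `ε = N^(-1/2)`, the rescaled moment `√N · (…)` is the rational
function `t (t x̂ + 2ε) / ((t - ε²) (t - 2ε²))` of `ε`, which is continuous at `ε = 0` with value `x̂`.
-/

open Real Filter MeasureTheory Set Topology

theorem integral_comp_add_right_Ioi {E : Type*} [NormedAddCommGroup E] [NormedSpace ℝ E]
    (f : ℝ → E) (a d : ℝ) : ∫ x in Ioi a, f (x + d) = ∫ x in Ioi (a + d), f x := by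
  simpa using (measurePreserving_add_right volume d).setIntegral_preimage_emb
    (MeasurableEquiv.addRight d).measurableEmbedding f (Ioi (a + d))

theorem integral_Ioi_zero_add_rpow {a c : ℝ} (ha : a < -1) (hc : 0 < c) :
    ∫ z in Ioi (0 : ℝ), (z + c) ^ a = -c ^ (a + 1) / (a + 1) := by
  rw [integral_comp_add_right_Ioi (· ^ a), zero_add, integral_Ioi_rpow_of_lt ha hc]

theorem integral_Ioi_sub_mul_add_rpow_neg {s c : ℝ} (hs : 2 < s) (hc : 0 < c) (a : ℝ) :
    ∫ z in Ioi (0 : ℝ), (z - a) * (z + c) ^ (-s)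
      = c ^ (2 - s) / (s - 2) - (a + c) * c ^ (1 - s) / (s - 1) := by
  have hsplit : ∀ z ∈ Ioi (0 : ℝ),
      (z - a) * (z + c) ^ (-s) = (z + c) ^ (1 - s) - (a + c) * (z + c) ^ (-s) := by
    intro z hz
    rw [sub_eq_add_neg 1 s, rpow_add (by linarith [mem_Ioi.mp hz]), rpow_one]
    ring
  have hint : ∀ {e : ℝ}, e < -1 → IntegrableOn (fun z : ℝ => (z + c) ^ e) (Ioi 0) :=
    fun he => integrableOn_add_rpow_Ioi_of_lt he (by linarith)
  rw [setIntegral_congr_fun measurableSet_Ioi hsplit,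
    integral_sub (hint (by linarith)) ((hint (by linarith)).const_mul _), integral_const_mul,
    integral_Ioi_zero_add_rpow (by linarith) hc, integral_Ioi_zero_add_rpow (by linarith) hc,
    show 1 - s + 1 = 2 - s by ring, show -s + 1 = 1 - s by ring]
  have : (2 : ℝ) - s ≠ 0 := by linarith
  have : (1 : ℝ) - s ≠ 0 := by linarith
  have : s - 2 ≠ 0 := by linarith
  have : s - 1 ≠ 0 := by linarith
  field_simp
  ring

theorem one_add_div_rpow_neg {c z : ℝ} (hc : 0 < c) (hz : 0 ≤ z) (s : ℝ) :
    (1 + z / c) ^ (-s) = c ^ s * (z + c) ^ (-s) := by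
  rw [show 1 + z / c = (z + c) / c by field_simp; ring, div_rpow (by linarith) hc.le,
    rpow_neg hc.le, div_inv_eq_mul, mul_comm]

theorem integral_centered_kernel {b s : ℝ} (hb : 0 < b) (hs : 2 < s) :
    ∫ z in Ioi (0 : ℝ), (z - 1) * (b⁻¹ * (1 + z / (s * b)) ^ (-s))
      = s * (s * (b - 1) + 2) / ((s - 1) * (s - 2)) := by
  set c := s * b with hc_def
  have hc : 0 < c := mul_pos (by linarith) hb
  have hpow2 : c ^ s * c ^ (2 - s) = c ^ 2 := by
    rw [← rpow_add hc, add_sub_cancel, rpow_two]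
  have hpow1 : c ^ s * c ^ (1 - s) = c := by
    rw [← rpow_add hc, add_sub_cancel, rpow_one]
  calc ∫ z in Ioi (0 : ℝ), (z - 1) * (b⁻¹ * (1 + z / c) ^ (-s))
      = ∫ z in Ioi (0 : ℝ), b⁻¹ * c ^ s * ((z - 1) * (z + c) ^ (-s)) :=
        setIntegral_congr_fun measurableSet_Ioi fun z hz => by
          rw [one_add_div_rpow_neg hc (le_of_lt hz)]; ring
    _ = b⁻¹ * ((c ^ s * c ^ (2 - s)) / (s - 2) - (1 + c) * (c ^ s * c ^ (1 - s)) / (s - 1)) := by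
        rw [integral_const_mul, integral_Ioi_sub_mul_add_rpow_neg hs hc]; ring
    _ = s * (s * (b - 1) + 2) / ((s - 1) * (s - 2)) := by
        have : s - 1 ≠ 0 := by linarith
        have : s - 2 ≠ 0 := by linarith
        rw [hpow2, hpow1, hc_def]
        field_simp
        ring

theorem tendsto_rescaled_moment_of_tendsto_zero {ι : Type*} {l : Filter ι} {ε : ι → ℝ}
    (hε : Tendsto ε l (𝓝 0)) {t : ℝ} (ht : t ≠ 0) (x : ℝ) :
    Tendsto (fun i => t * (t * x + 2 * ε i) / ((t - ε i ^ 2) * (t - 2 * ε i ^ 2))) l (𝓝 x) := by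
  have hcont : ContinuousAt
      (fun e : ℝ => t * (t * x + 2 * e) / ((t - e ^ 2) * (t - 2 * e ^ 2))) 0 := by
    fun_prop (disch := simp [ht])
  have hx : t * (t * x + 2 * 0) / ((t - 0 ^ 2) * (t - 2 * 0 ^ 2)) = x := by
    norm_num
    field_simp
  simpa only [hx, Function.comp_def] using hcont.tendsto.comp hε

theorem mul_centered_moment_eq {t x r : ℝ} (hr : 0 < r) (hs : 2 < t * r ^ 2) :
    r * (t * r ^ 2 * (t * r ^ 2 * (1 + x / r - 1) + 2) / ((t * r ^ 2 - 1) * (t * r ^ 2 - 2)))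
      = t * (t * x + 2 * r⁻¹) / ((t - r⁻¹ ^ 2) * (t - 2 * r⁻¹ ^ 2)) := by
  have : t * r ^ 2 - 1 ≠ 0 := by linarith
  have : t * r ^ 2 - 2 ≠ 0 := by linarith
  field_simp
  ring

/-- First moment asymptotics of the centered rescaled kernel (line 2 of (d5)):
with `s_N = tN` and `b_N = 1 + x̂ N^{-1/2}`,
`√N ∫₀^∞ (z−1) b_N⁻¹ (1 + z/(s_N b_N))^{-s_N} dz → x̂` as `N → ∞`. -/
theorem centered_kernel_first_moment (t xh : ℝ) (ht : 0 < t) :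
    Tendsto (fun N : ℕ =>
        Real.sqrt N *
          ∫ z in Set.Ioi (0 : ℝ),
            (z - 1) * ((1 + xh / Real.sqrt N)⁻¹ *
              (1 + z / (t * N * (1 + xh / Real.sqrt N))) ^ (-(t * N))))
      atTop (nhds xh) := by
  have hsqrt : Tendsto (fun N : ℕ => √(N : ℝ)) atTop atTop :=
    tendsto_sqrt_atTop.comp tendsto_natCast_atTop_atTop
  have hb : ∀ᶠ N : ℕ in atTop, 0 < 1 + xh / √(N : ℝ) :=
    ((tendsto_const_nhds.div_atTop hsqrt).const_add 1).eventually (lt_mem_nhds (by norm_num))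
  have hs : ∀ᶠ N : ℕ in atTop, 2 < t * N :=
    (tendsto_natCast_atTop_atTop.const_mul_atTop ht).eventually_gt_atTop 2
  refine (tendsto_rescaled_moment_of_tendsto_zero
    (tendsto_inv_atTop_zero.comp hsqrt) ht.ne' xh).congr' ?_
  filter_upwards [hb, hs, eventually_gt_atTop 0] with N hbN hsN hN
  rw [integral_centered_kernel hbN hsN, Function.comp_apply]
  have hr : 0 < √(N : ℝ) := sqrt_pos.mpr (by exact_mod_cast hN)
  have hNr : (N : ℝ) = √(N : ℝ) ^ 2 := (sq_sqrt (Nat.cast_nonneg N)).symm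
  generalize √(N : ℝ) = r at hr hNr ⊢
  rw [hNr] at hsN ⊢
  exact (mul_centered_moment_eq hr hsN).symm
end
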